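/- arXiv:2501.02601 — 4 statements merged into one kernel-verified Lean document; each statement's English description precedes it below -/
import Mathlib

section
/- With the notation of the quadratically-perturbed Lasso objective: if b̂ minimizes L0(b) = (1/2)‖Xb − y‖² + g(b) (g convex) and b^μ minimizes L_μ(b) = L0(b) + (μn/2)‖Σ^{1/2}(b − b*)‖², then ‖X(b̂ − b^μ)‖² ≤ μn‖Σ^{1/2}(b̂ − b*)‖². -/
/-
The quadratic part of `L_μ` satisfies the parallelogram-type identity
`q((1-t)a + tb) = (1-t) q(a) + t q(b) - t(1-t) q(b-a)`, and `g` is convex, so along the segment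
from `b^μ` to `b̂` the objective `L_μ` lies below its chord by `t(1-t)‖X(b̂ - b^μ)‖²/2`.
Comparing `L_μ(b^μ)` with `L_μ` at the points of that segment and letting `t → 0` gives
`L_μ(b^μ) + ‖X(b̂ - b^μ)‖²/2 ≤ L_μ(b̂)`; since `L0(b̂) ≤ L0(b^μ)` and the penalty at `b^μ` is
nonnegative, the claim follows.
-/

open Matrix BigOperators

noncomputable def vnorm {m : ℕ} (v : Fin m → ℝ) : ℝ := Real.sqrt (∑ i, v i ^ 2)

noncomputable def quadForm {p : ℕ} (Sig : Matrix (Fin p) (Fin p) ℝ) (v : Fin p → ℝ) : ℝ :=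
  v ⬝ᵥ Sig.mulVec v

open Filter Topology Set

lemma le_of_forall_one_sub_mul_le {D C : ℝ} (h : ∀ t ∈ Ioc (0 : ℝ) 1, (1 - t) * D ≤ C) :
    D ≤ C := by
  have hlim : Tendsto (fun t : ℝ => (1 - t) * D) (𝓝[>] 0) (𝓝 D) := by
    have : Tendsto (fun t : ℝ => (1 - t) * D) (𝓝 0) (𝓝 ((1 - 0) * D)) :=
      ((continuous_const.sub continuous_id).mul continuous_const).tendsto 0
    simpa using this.mono_left nhdsWithin_le_nhds
  exact le_of_tendsto hlim (eventually_of_mem (Ioc_mem_nhdsGT one_pos) h)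

lemma IsMinOn.add_le_of_le_chord_sub {E : Type*} [AddCommGroup E] [Module ℝ E] {F : E → ℝ}
    {a b : E} {κ : ℝ} (hmin : IsMinOn F univ a)
    (hchord : ∀ t ∈ Ioc (0 : ℝ) 1,
      F ((1 - t) • a + t • b) ≤ (1 - t) * F a + t * F b - t * (1 - t) * κ) :
    F a + κ ≤ F b := by
  have h : ∀ t ∈ Ioc (0 : ℝ) 1, (1 - t) * κ ≤ F b - F a := by
    intro t ht
    have hle := (hmin (mem_univ ((1 - t) • a + t • b))).trans (hchord t ht)
    have : t * ((1 - t) * κ) ≤ t * (F b - F a) := by linarith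
    exact le_of_mul_le_mul_left this ht.1
  linarith [le_of_forall_one_sub_mul_le h]

lemma quadForm_one_sub_smul_add_smul_sub {p : ℕ} (Sig : Matrix (Fin p) (Fin p) ℝ)
    (t : ℝ) (a b c : Fin p → ℝ) :
    quadForm Sig ((1 - t) • a + t • b - c) =
      (1 - t) * quadForm Sig (a - c) + t * quadForm Sig (b - c)
        - t * (1 - t) * quadForm Sig (b - a) := by
  simp only [quadForm, mulVec_smul, mulVec_add, mulVec_sub, dotProduct_smul, smul_dotProduct,
    dotProduct_add, add_dotProduct, dotProduct_sub, sub_dotProduct, smul_eq_mul]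
  ring

lemma vnorm_sq_eq_quadForm_one {m : ℕ} (v : Fin m → ℝ) : vnorm v ^ 2 = quadForm 1 v := by
  rw [vnorm, Real.sq_sqrt (Finset.sum_nonneg fun i _ => sq_nonneg _), quadForm, one_mulVec]
  simp only [dotProduct, sq]

lemma vnorm_sq_mulVec_one_sub_smul_add_smul_sub {n p : ℕ} (X : Matrix (Fin n) (Fin p) ℝ)
    (y : Fin n → ℝ) (t : ℝ) (a b : Fin p → ℝ) :
    vnorm (X *ᵥ ((1 - t) • a + t • b) - y) ^ 2 =
      (1 - t) * vnorm (X *ᵥ a - y) ^ 2 + t * vnorm (X *ᵥ b - y) ^ 2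
        - t * (1 - t) * vnorm (X *ᵥ (b - a)) ^ 2 := by
  have hres : X *ᵥ ((1 - t) • a + t • b) - y = (1 - t) • X *ᵥ a + t • X *ᵥ b - y := by
    rw [mulVec_add, mulVec_smul, mulVec_smul]
  simp only [vnorm_sq_eq_quadForm_one, hres, quadForm_one_sub_smul_add_smul_sub, mulVec_sub]

theorem stmt_1_general {n p : ℕ} (X : Matrix (Fin n) (Fin p) ℝ) (y : Fin n → ℝ)
    (bstar : Fin p → ℝ) (g : (Fin p → ℝ) → ℝ) (hg : ConvexOn ℝ Set.univ g)
    (Sig : Matrix (Fin p) (Fin p) ℝ)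
    (hPSD : ∀ v : Fin p → ℝ, 0 ≤ quadForm Sig v)
    (μ : ℝ) (hμ : 0 < μ)
    (L0 Lμ : (Fin p → ℝ) → ℝ)
    (hL0 : ∀ b, L0 b = (1/2) * (vnorm (X.mulVec b - y))^2 + g b)
    (hLμ : ∀ b, Lμ b = L0 b + (μ * n / 2) * quadForm Sig (b - bstar))
    (bhat bμ : Fin p → ℝ)
    (hbhat : ∀ b, L0 bhat ≤ L0 b)
    (hbμ : ∀ b, Lμ bμ ≤ Lμ b) :
    (vnorm (X.mulVec (bhat - bμ)))^2 ≤ μ * n * quadForm Sig (bhat - bstar) := by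
  have hμn : 0 ≤ μ * n := by positivity
  have hchord : ∀ t ∈ Ioc (0 : ℝ) 1, Lμ ((1 - t) • bμ + t • bhat) ≤
      (1 - t) * Lμ bμ + t * Lμ bhat - t * (1 - t) * (vnorm (X *ᵥ (bhat - bμ)) ^ 2 / 2) := by
    rintro t ⟨ht0, ht1⟩
    have hgt := hg.2 (mem_univ bμ) (mem_univ bhat) (sub_nonneg.2 ht1) ht0.le (sub_add_cancel 1 t)
    have hpen : 0 ≤ t * (1 - t) * (μ * n) * quadForm Sig (bhat - bμ) :=
      mul_nonneg (mul_nonneg (mul_nonneg ht0.le (sub_nonneg.2 ht1)) hμn) (hPSD _)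
    simp only [smul_eq_mul] at hgt
    simp only [hLμ, hL0, vnorm_sq_mulVec_one_sub_smul_add_smul_sub,
      quadForm_one_sub_smul_add_smul_sub]
    linarith
  have hgrowth := IsMinOn.add_le_of_le_chord_sub (isMinOn_univ_iff.2 hbμ) hchord
  have hpen_bμ := mul_nonneg hμn (hPSD (bμ - bstar))
  rw [hLμ, hLμ] at hgrowth
  linarith [hbhat bμ]

/-- `‖X(b̂ − b^μ)‖² ≤ μn‖Σ^{1/2}(b̂ − b*)‖²`. -/
theorem stmt_1 {n p : ℕ} (X : Matrix (Fin n) (Fin p) ℝ) (y : Fin n → ℝ)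
    (bstar : Fin p → ℝ) (g : (Fin p → ℝ) → ℝ) (hg : ConvexOn ℝ Set.univ g)
    (Sig : Matrix (Fin p) (Fin p) ℝ) (hSym : Sig.IsSymm)
    (hPSD : ∀ v : Fin p → ℝ, 0 ≤ quadForm Sig v)
    (μ : ℝ) (hμ : 0 < μ)
    (L0 Lμ : (Fin p → ℝ) → ℝ)
    (hL0 : ∀ b, L0 b = (1/2) * (vnorm (X.mulVec b - y))^2 + g b)
    (hLμ : ∀ b, Lμ b = L0 b + (μ * n / 2) * quadForm Sig (b - bstar))
    (bhat bμ : Fin p → ℝ)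
    (hbhat : ∀ b, L0 bhat ≤ L0 b)
    (hbμ : ∀ b, Lμ bμ ≤ Lμ b) :
    (vnorm (X.mulVec (bhat - bμ)))^2 ≤ μ * n * quadForm Sig (bhat - bstar) :=
  stmt_1_general X y bstar g hg Sig hPSD μ hμ L0 Lμ hL0 hLμ bhat bμ hbhat hbμ
end

section
/- Let b̂ be a Lasso solution satisfying the KKT conditions (for every j with b̂_j ≠ 0, e_jᵀXᵀ(y − Xb̂) = λ√n·sgn(b̂_j)). If ‖XΣ^{-1/2}‖_op ≤ √n(2 + √γ) and Σ ⪯ κI_p, then n λ² ‖b̂‖₀ ≤ (2 + √γ)² κ n ‖y − Xb̂‖², i.e., λ²‖b̂‖₀ ≤ (2+√γ)²κ‖y − Xb̂‖². -/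
open Matrix BigOperators

/-- Symmetric bilinear Cauchy–Schwarz for a nonnegative quadratic form. -/
lemma bilin_CS {p : ℕ} (S : Matrix (Fin p) (Fin p) ℝ)
    (hsym : ∀ a b : Fin p → ℝ, a ⬝ᵥ S.mulVec b = b ⬝ᵥ S.mulVec a)
    (hnn : ∀ v, 0 ≤ quadForm S v) (a b : Fin p → ℝ) :
    (a ⬝ᵥ S.mulVec b) ^ 2 ≤ quadForm S a * quadForm S b := by
  have key : ∀ t : ℝ, 0 ≤ quadForm S a * (t * t) + (2 * (a ⬝ᵥ S.mulVec b)) * t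
      + quadForm S b := by
    intro t
    have h0 := hnn (t • a + b)
    have hexp : quadForm S (t • a + b) = quadForm S a * (t * t)
        + (2 * (a ⬝ᵥ S.mulVec b)) * t + quadForm S b := by
      have hba := hsym b a
      simp only [quadForm, Matrix.mulVec_add, Matrix.mulVec_smul, dotProduct_add,
        add_dotProduct, dotProduct_smul, smul_dotProduct, smul_eq_mul] at *
      ring_nf
      rw [hba]; ring
    linarith [hexp ▸ h0]
  have h := discrim_le_zero key
  rw [discrim] at h
  nlinarith

lemma cancel_sq {a M : ℝ} (ha : 0 ≤ a) (hM : 0 ≤ M) (h : a ^ 2 ≤ M * a) : a ≤ M := by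
  rcases eq_or_lt_of_le ha with h0 | h0
  · linarith
  · nlinarith

/-- from the Lasso KKT conditions and an operator norm bound on
`X Σ^{-1/2}` (encoded by the matrix `Q = Σ^{-1/2}` with `Q Σ Q = I`),
the sparsity `‖b̂‖₀` is controlled by the residual norm. -/
theorem stmt_4 {n p : ℕ} (X : Matrix (Fin n) (Fin p) ℝ) (y : Fin n → ℝ)
    (lam γ κ : ℝ) (hlam : 0 < lam) (hγ : 0 < γ) (hκ : 0 < κ)
    (Sig Q : Matrix (Fin p) (Fin p) ℝ) (hSym : Sig.IsSymm) (hQSym : Q.IsSymm)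
    (hPD : ∀ v : Fin p → ℝ, v ≠ 0 → 0 < quadForm Sig v)
    (hUB : ∀ v : Fin p → ℝ, quadForm Sig v ≤ κ * ∑ i, v i ^ 2)
    (hQ : Q * Sig * Q = 1)
    (hop : ∀ v : Fin p → ℝ, vnorm ((X * Q).mulVec v) ≤ Real.sqrt n * (2 + Real.sqrt γ) * vnorm v)
    (bhat : Fin p → ℝ)
    (hKKT : ∀ j : Fin p, bhat j ≠ 0 →
      |(Xᵀ.mulVec (y - X.mulVec bhat)) j| = lam * Real.sqrt n) :
    (n : ℝ) * lam ^ 2 * (Finset.univ.filter (fun j => bhat j ≠ 0)).card ≤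
      (2 + Real.sqrt γ) ^ 2 * κ * n * (vnorm (y - X.mulVec bhat)) ^ 2 := by
  set r : Fin n → ℝ := y - X.mulVec bhat with hr
  set u : Fin p → ℝ := Xᵀ.mulVec r with hu
  set w : Fin p → ℝ := Q.mulVec u with hw
  set v : Fin p → ℝ := Q.mulVec w with hv
  have hγnn : (0:ℝ) ≤ 2 + Real.sqrt γ := by positivity
  -- symmetry of the bilinear form of Sig
  have hsymS : ∀ a b : Fin p → ℝ, a ⬝ᵥ Sig.mulVec b = b ⬝ᵥ Sig.mulVec a := by
    intro a b
    rw [Matrix.dotProduct_mulVec, ← Matrix.mulVec_transpose, hSym.eq,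
      dotProduct_comm]
  have hnnS : ∀ z, 0 ≤ quadForm Sig z := by
    intro z
    by_cases hz : z = 0
    · simp [quadForm, hz]
    · exact (hPD z hz).le
  -- Sig * Q * Q = 1
  have hSQQ : Sig * Q * Q = 1 := by
    have h1 : Q * (Sig * Q) = 1 := by rw [← mul_assoc]; exact hQ
    exact (mul_eq_one_comm).mp h1
  -- u = Sig.mulVec v
  have huv : Sig.mulVec v = u := by
    rw [hv, hw, Matrix.mulVec_mulVec, Matrix.mulVec_mulVec, hSQQ, Matrix.one_mulVec]
  -- quadForm Sig v = ∑ w²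
  have hQmove : ∀ x : Fin p → ℝ, w ⬝ᵥ Q.mulVec x = v ⬝ᵥ x := by
    intro x
    rw [Matrix.dotProduct_mulVec, ← Matrix.mulVec_transpose, hQSym.eq]
  have hqv : quadForm Sig v = ∑ i, w i ^ 2 := by
    have key : quadForm Sig v = w ⬝ᵥ (Q * Sig * Q).mulVec w := by
      rw [mul_assoc, ← Matrix.mulVec_mulVec, hQmove, quadForm,
        ← Matrix.mulVec_mulVec, ← hv]
    rw [key, hQ, Matrix.one_mulVec]
    simp [dotProduct, sq]
  have hsum_nonneg : ∀ {m : ℕ} (z : Fin m → ℝ), (0:ℝ) ≤ ∑ i, z i ^ 2 := by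
    intro m z; positivity
  -- ∑ u² = u ⬝ᵥ Sig.mulVec v
  have hBu : u ⬝ᵥ Sig.mulVec v = ∑ i, u i ^ 2 := by
    rw [huv]; simp [dotProduct, sq]
  -- Step 1: ∑ u² ≤ κ * ∑ w²
  have step1 : ∑ i, u i ^ 2 ≤ κ * ∑ i, w i ^ 2 := by
    have hcs := bilin_CS Sig hsymS hnnS u v
    rw [hBu, hqv] at hcs
    have hub := hUB u
    apply cancel_sq (hsum_nonneg u) (by positivity)
    calc (∑ i, u i ^ 2) ^ 2 ≤ quadForm Sig u * ∑ i, w i ^ 2 := hcs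
      _ ≤ (κ * ∑ i, u i ^ 2) * ∑ i, w i ^ 2 :=
          mul_le_mul_of_nonneg_right hub (hsum_nonneg w)
      _ = (κ * ∑ i, w i ^ 2) * ∑ i, u i ^ 2 := by ring
  -- Step 2: ∑ w² ≤ n * (2+√γ)² * ∑ r²
  have step2 : ∑ i, w i ^ 2 ≤ (n : ℝ) * (2 + Real.sqrt γ) ^ 2 * ∑ i, r i ^ 2 := by
    set z : Fin n → ℝ := (X * Q).mulVec w with hz
    have hwz : ∑ i, w i ^ 2 = z ⬝ᵥ r := by
      have h1 : w = (Q * Xᵀ).mulVec r := by rw [hw, hu, Matrix.mulVec_mulVec]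
      calc ∑ i, w i ^ 2 = w ⬝ᵥ w := by simp [dotProduct, sq]
        _ = w ⬝ᵥ (Q * Xᵀ).mulVec r := by rw [← h1]
        _ = ((Q * Xᵀ)ᵀ.mulVec w) ⬝ᵥ r := by
            rw [Matrix.dotProduct_mulVec, ← Matrix.mulVec_transpose]
        _ = z ⬝ᵥ r := by
            rw [hz, Matrix.transpose_mul, Matrix.transpose_transpose, hQSym.eq]
    have hcs : (z ⬝ᵥ r) ^ 2 ≤ (∑ i, z i ^ 2) * ∑ i, r i ^ 2 := by
      simpa [dotProduct] using Finset.sum_mul_sq_le_sq_mul_sq Finset.univ z r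
    have hopw := hop w
    have hzsq : ∑ i, z i ^ 2 ≤ (n : ℝ) * (2 + Real.sqrt γ) ^ 2 * ∑ i, w i ^ 2 := by
      have h1 : (vnorm z) ^ 2 ≤ (Real.sqrt n * (2 + Real.sqrt γ) * vnorm w) ^ 2 := by
        apply sq_le_sq' _ hopw
        have : (0:ℝ) ≤ vnorm z := Real.sqrt_nonneg _
        nlinarith [Real.sqrt_nonneg (n:ℝ), Real.sqrt_nonneg (∑ i, w i ^ 2)]
      rw [vnorm, Real.sq_sqrt (hsum_nonneg z)] at h1
      calc ∑ i, z i ^ 2 ≤ (Real.sqrt n * (2 + Real.sqrt γ) * vnorm w) ^ 2 := h1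
        _ = (Real.sqrt n) ^ 2 * (2 + Real.sqrt γ) ^ 2 * (vnorm w) ^ 2 := by ring
        _ = (n : ℝ) * (2 + Real.sqrt γ) ^ 2 * ∑ i, w i ^ 2 := by
            rw [Real.sq_sqrt (Nat.cast_nonneg n), vnorm, Real.sq_sqrt (hsum_nonneg w)]
    apply cancel_sq (hsum_nonneg w) (by positivity)
    calc (∑ i, w i ^ 2) ^ 2 = (z ⬝ᵥ r) ^ 2 := by rw [hwz]
      _ ≤ (∑ i, z i ^ 2) * ∑ i, r i ^ 2 := hcs
      _ ≤ ((n : ℝ) * (2 + Real.sqrt γ) ^ 2 * ∑ i, w i ^ 2) * ∑ i, r i ^ 2 :=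
          mul_le_mul_of_nonneg_right hzsq (hsum_nonneg r)
      _ = ((n : ℝ) * (2 + Real.sqrt γ) ^ 2 * ∑ i, r i ^ 2) * ∑ i, w i ^ 2 := by ring
  -- Step 0: n λ² |S| = ∑_{j ∈ S} u j ²  ≤ ∑ u²
  have step0 : (n : ℝ) * lam ^ 2 * (Finset.univ.filter (fun j => bhat j ≠ 0)).card
      ≤ ∑ i, u i ^ 2 := by
    have hcard : ∑ j ∈ Finset.univ.filter (fun j => bhat j ≠ 0), u j ^ 2
        = (Finset.univ.filter (fun j => bhat j ≠ 0)).card * ((n:ℝ) * lam ^ 2) := by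
      rw [Finset.sum_congr rfl (fun j hj => ?_), Finset.sum_const, nsmul_eq_mul]
      have hj' := (Finset.mem_filter.mp hj).2
      have := hKKT j hj'
      rw [← sq_abs, this]
      rw [mul_pow, Real.sq_sqrt (Nat.cast_nonneg n)]
      ring
    have hsub : ∑ j ∈ Finset.univ.filter (fun j => bhat j ≠ 0), u j ^ 2
        ≤ ∑ i, u i ^ 2 :=
      Finset.sum_le_sum_of_subset_of_nonneg (Finset.filter_subset _ _)
        (fun i _ _ => sq_nonneg _)
    calc (n : ℝ) * lam ^ 2 * (Finset.univ.filter (fun j => bhat j ≠ 0)).card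
        = ∑ j ∈ Finset.univ.filter (fun j => bhat j ≠ 0), u j ^ 2 := by rw [hcard]; ring
      _ ≤ ∑ i, u i ^ 2 := hsub
  have hrn : (vnorm r) ^ 2 = ∑ i, r i ^ 2 := Real.sq_sqrt (hsum_nonneg r)
  calc (n : ℝ) * lam ^ 2 * (Finset.univ.filter (fun j => bhat j ≠ 0)).card
      ≤ ∑ i, u i ^ 2 := step0
    _ ≤ κ * ∑ i, w i ^ 2 := step1
    _ ≤ κ * ((n : ℝ) * (2 + Real.sqrt γ) ^ 2 * ∑ i, r i ^ 2) :=
        mul_le_mul_of_nonneg_left step2 hκ.le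
    _ = (2 + Real.sqrt γ) ^ 2 * κ * n * (vnorm r) ^ 2 := by rw [hrn]; ring
end

section
/- Let K = {h ∈ ℝ^p : Σ_{j∈S^c} |h_j| ≤ −sᵀh} where s ∈ {−1,0,1}^p has support S of size k. Suppose the restricted eigenvalue condition Δ*‖v‖ ≤ ‖Xv‖/√n holds for all v ∈ K, and that ‖Xs‖ ≤ c₁√(nk), √n ≤ c₂√k, ‖ε‖ ≤ c₃√n. Let b* have sign pattern s, y = Xb* + ε, and let b̂ be a Lasso minimizer of (1/2)‖Xb − y‖² + λ√n‖b‖₁ with h = b̂ − b*. Then ‖Xh‖/√n ≤ Δ*^{-1}(λ√(k/n) + c₁c₂c₃). -/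
/-!
Comparing `b̂` with the convex combinations `b* + τ (b̂ - b*)` and letting `τ → 1` gives the
basic inequality `‖Xh‖² ≤ εᵀXh + λ√n (‖b*‖₁ - ‖b̂‖₁)`, and the sign pattern of `b*` bounds the
ℓ¹ gap by `-sᵀh - ‖h_{Sᶜ}‖₁`. If `‖Xh‖ > ‖ε‖` this forces `h` into the cone `K`, where the
restricted eigenvalue condition and Cauchy–Schwarz give `‖Xh‖ ≤ ‖ε‖ + λ√k/Δ`. The constants
are absorbed because the restricted eigenvalue condition at `-s ∈ K` gives `Δ ≤ c₁`, and it
makes `X` injective on vectors supported on `S`, so `k ≤ n` and `c₂ ≥ 1`.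
-/
open Matrix BigOperators

noncomputable def vnorm1 {m : ℕ} (v : Fin m → ℝ) : ℝ := ∑ i, |v i|

open Filter Topology Finset

section Norms

variable {m : ℕ}

lemma vnorm_nonneg (v : Fin m → ℝ) : 0 ≤ vnorm v := Real.sqrt_nonneg _

lemma vnorm_sq (v : Fin m → ℝ) : vnorm v ^ 2 = ∑ i, v i ^ 2 :=
  Real.sq_sqrt (sum_nonneg fun _ _ => sq_nonneg _)

lemma vnorm_neg (v : Fin m → ℝ) : vnorm (-v) = vnorm v := by
  simp only [vnorm, Pi.neg_apply, neg_sq]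

lemma vnorm_eq_zero_iff {v : Fin m → ℝ} : vnorm v = 0 ↔ v = 0 := by
  rw [vnorm, Real.sqrt_eq_zero (sum_nonneg fun _ _ => sq_nonneg _),
    sum_eq_zero_iff_of_nonneg fun _ _ => sq_nonneg _, funext_iff]
  simp

lemma dotProduct_le_vnorm_mul_vnorm (u v : Fin m → ℝ) : u ⬝ᵥ v ≤ vnorm u * vnorm v :=
  Real.sum_mul_le_sqrt_mul_sqrt _ u v

lemma vnorm_smul_sub_sq (t : ℝ) (a e : Fin m → ℝ) :
    vnorm (t • a - e) ^ 2 = t ^ 2 * vnorm a ^ 2 - 2 * t * (a ⬝ᵥ e) + vnorm e ^ 2 := by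
  simp only [vnorm_sq, dotProduct, mul_sum, ← sum_sub_distrib, ← sum_add_distrib]
  exact sum_congr rfl fun i _ => by simp only [Pi.sub_apply, Pi.smul_apply, smul_eq_mul]; ring

lemma vnorm1_add_smul_sub_le (a b : Fin m → ℝ) {τ : ℝ} (h0 : 0 ≤ τ) (h1 : τ ≤ 1) :
    vnorm1 (a + τ • (b - a)) ≤ (1 - τ) * vnorm1 a + τ * vnorm1 b := by
  simp only [vnorm1, mul_sum, ← sum_add_distrib]
  refine sum_le_sum fun j _ => ?_
  calc |(a + τ • (b - a)) j| = |(1 - τ) * a j + τ * b j| := by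
        simp only [Pi.add_apply, Pi.smul_apply, Pi.sub_apply, smul_eq_mul]; ring_nf
    _ ≤ |(1 - τ) * a j| + |τ * b j| := abs_add_le _ _
    _ = (1 - τ) * |a j| + τ * |b j| := by
        rw [abs_mul, abs_mul, abs_of_nonneg (sub_nonneg.mpr h1), abs_of_nonneg h0]

end Norms

lemma le_of_forall_mem_Ico_one_add_div_two_mul_le {a b : ℝ}
    (h : ∀ τ ∈ Set.Ico (0 : ℝ) 1, (1 + τ) / 2 * a ≤ b) : a ≤ b := by
  have hlim : Tendsto (fun τ : ℝ => (1 + τ) / 2 * a) (𝓝[<] 1) (𝓝 a) := by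
    have : Continuous fun τ : ℝ => (1 + τ) / 2 * a := by fun_prop
    simpa using (this.tendsto 1).mono_left nhdsWithin_le_nhds
  exact le_of_tendsto hlim (eventually_of_mem (Ico_mem_nhdsLT one_pos) h)

/-- Competing with `b* + τ (b̂ - b*)` for `τ → 1`, rather than with `b*` alone, removes the
factor `1 / 2` from the quadratic term. -/
lemma lasso_basic_inequality {n p : ℕ} (X : Matrix (Fin n) (Fin p) ℝ) (bstar bhat : Fin p → ℝ)
    (ε : Fin n → ℝ) {μ : ℝ} (hμ : 0 ≤ μ)
    (hbhat : ∀ b : Fin p → ℝ,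
      1 / 2 * vnorm (X *ᵥ bhat - (X *ᵥ bstar + ε)) ^ 2 + μ * vnorm1 bhat ≤
      1 / 2 * vnorm (X *ᵥ b - (X *ᵥ bstar + ε)) ^ 2 + μ * vnorm1 b) :
    vnorm (X *ᵥ (bhat - bstar)) ^ 2 ≤
      X *ᵥ (bhat - bstar) ⬝ᵥ ε + μ * (vnorm1 bstar - vnorm1 bhat) := by
  set a := X *ᵥ (bhat - bstar)
  have hres : ∀ τ : ℝ, X *ᵥ (bstar + τ • (bhat - bstar)) - (X *ᵥ bstar + ε) = τ • a - ε := by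
    intro τ
    rw [mulVec_add, mulVec_smul]
    abel
  apply le_of_forall_mem_Ico_one_add_div_two_mul_le
  rintro τ ⟨hτ0, hτ1⟩
  have hopt := hbhat (bstar + τ • (bhat - bstar))
  have hres₁ : X *ᵥ bhat - (X *ᵥ bstar + ε) = (1 : ℝ) • a - ε := by
    simpa using hres 1
  rw [hres, hres₁, vnorm_smul_sub_sq, vnorm_smul_sub_sq] at hopt
  have hconv := mul_le_mul_of_nonneg_left (vnorm1_add_smul_sub_le bstar bhat hτ0 hτ1.le) hμ
  have hfactor : (1 - τ) * ((1 + τ) / 2 * vnorm a ^ 2 - (a ⬝ᵥ ε + μ * (vnorm1 bstar - vnorm1 bhat)))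
      ≤ (1 - τ) * 0 := by
    linear_combination hopt + hconv
  linarith [le_of_mul_le_mul_left hfactor (sub_pos.mpr hτ1)]

section SignPattern

variable {p : ℕ}

/-- The cone `K` of the paper. -/
def signCone (s : Fin p → ℝ) (S : Finset (Fin p)) : Set (Fin p → ℝ) :=
  {h | ∑ j ∈ Sᶜ, |h j| ≤ -(s ⬝ᵥ h)}

lemma neg_mem_signCone {s : Fin p → ℝ} {S : Finset (Fin p)} (hs : ∀ j ∉ S, s j = 0) :
    -s ∈ signCone s S := by
  have hoff : ∑ j ∈ Sᶜ, |(-s) j| = 0 :=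
    sum_eq_zero fun j hj => by rw [Pi.neg_apply, hs j (mem_compl.mp hj), neg_zero, abs_zero]
  rw [signCone, Set.mem_ofPred_eq, hoff, dotProduct_neg, neg_neg]
  exact sum_nonneg fun j _ => mul_self_nonneg (s j)

lemma mem_signCone_or_neg_mem (s : Fin p → ℝ) {S : Finset (Fin p)} {z : Fin p → ℝ}
    (hz : ∀ j ∉ S, z j = 0) : z ∈ signCone s S ∨ -z ∈ signCone s S := by
  have hoff : ∀ w : Fin p → ℝ, (∀ j ∉ S, w j = 0) → ∑ j ∈ Sᶜ, |w j| = 0 := fun w hw =>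
    sum_eq_zero fun j hj => by rw [hw j (mem_compl.mp hj), abs_zero]
  simp only [signCone, Set.mem_ofPred_eq, hoff z hz,
    hoff (-z) fun j hj => by rw [Pi.neg_apply, hz j hj, neg_zero], dotProduct_neg, neg_neg,
    neg_nonneg]
  exact le_total _ _

lemma abs_sub_abs_add_ite_le {σ β x : ℝ} (hσ : σ = -1 ∨ σ = 0 ∨ σ = 1)
    (hβ : β ≠ 0 → Real.sign β = σ) :
    |β| - |x| + (if σ = 0 then |x - β| else 0) ≤ -(σ * (x - β)) := by
  rcases lt_trichotomy β 0 with hneg | rfl | hpos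
  · have hσneg : σ = -1 := by rw [← hβ hneg.ne, Real.sign_of_neg hneg]
    subst hσneg
    rw [abs_of_neg hneg, if_neg (by norm_num)]
    linarith [neg_abs_le x]
  · rcases hσ with rfl | rfl | rfl <;> simp [neg_abs_le, le_abs_self]
  · have hσpos : σ = 1 := by rw [← hβ hpos.ne', Real.sign_of_pos hpos]
    subst hσpos
    rw [abs_of_pos hpos, if_neg one_ne_zero]
    linarith [le_abs_self x]

lemma vnorm1_sub_vnorm1_le {s bstar : Fin p → ℝ} {S : Finset (Fin p)}
    (hs : ∀ j, s j = -1 ∨ s j = 0 ∨ s j = 1) (hS : S = univ.filter fun j => s j ≠ 0)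
    (hsign : ∀ j, bstar j ≠ 0 → Real.sign (bstar j) = s j) (b : Fin p → ℝ) :
    vnorm1 bstar - vnorm1 b ≤ -(s ⬝ᵥ (b - bstar)) - ∑ j ∈ Sᶜ, |(b - bstar) j| := by
  have hoff : ∑ j ∈ Sᶜ, |(b - bstar) j| = ∑ j, if s j = 0 then |b j - bstar j| else 0 := by
    rw [hS, compl_filter, sum_filter]
    simp only [not_not, Pi.sub_apply]
  have hsum := sum_le_sum fun j (_ : j ∈ univ) => abs_sub_abs_add_ite_le (hs j) (hsign j) (x := b j)
  rw [sum_add_distrib, sum_sub_distrib, sum_neg_distrib] at hsum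
  rw [hoff, vnorm1, vnorm1, dotProduct]
  simp only [Pi.sub_apply]
  linarith

lemma vnorm_eq_sqrt_card {s : Fin p → ℝ} {S : Finset (Fin p)}
    (hs : ∀ j, s j = -1 ∨ s j = 0 ∨ s j = 1) (hS : S = univ.filter fun j => s j ≠ 0) :
    vnorm s = √(S.card) := by
  have hsq : ∀ j, s j ^ 2 = if s j ≠ 0 then 1 else 0 := fun j => by
    rcases hs j with h | h | h <;> simp [h]
  rw [vnorm, hS, card_filter]
  simp only [hsq, Nat.cast_sum, Nat.cast_ite, Nat.cast_one, Nat.cast_zero]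

end SignPattern

section RestrictedEigenvalue

variable {n p : ℕ}

def RestrictedEigenvalue (X : Matrix (Fin n) (Fin p) ℝ) (K : Set (Fin p → ℝ)) (Δ : ℝ) : Prop :=
  ∀ v ∈ K, Δ * vnorm v ≤ vnorm (X *ᵥ v) / √n

variable {X : Matrix (Fin n) (Fin p) ℝ} {K : Set (Fin p → ℝ)} {Δ : ℝ}

lemma RestrictedEigenvalue.eq_zero_of_mulVec_eq_zero (hRE : RestrictedEigenvalue X K Δ)
    (hΔ : 0 < Δ) {v : Fin p → ℝ} (hv : v ∈ K) (hXv : X *ᵥ v = 0) : v = 0 := by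
  have h := hRE v hv
  rw [hXv, vnorm_eq_zero_iff.mpr rfl, zero_div] at h
  exact vnorm_eq_zero_iff.mp
    (le_antisymm (nonpos_of_mul_nonpos_right h hΔ) (vnorm_nonneg v))

lemma card_le_of_mulVec_eq_zero {S : Finset (Fin p)}
    (hX : ∀ z : Fin p → ℝ, (∀ j ∉ S, z j = 0) → X *ᵥ z = 0 → z = 0) : S.card ≤ n := by
  let F := X.mulVecLin ∘ₗ Function.ExtendByZero.linearMap ℝ (Subtype.val : S → Fin p)
  have hF : Function.Injective F := by
    rw [← LinearMap.ker_eq_bot, LinearMap.ker_eq_bot']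
    intro c hc
    have hz : Function.extend Subtype.val c 0 = 0 := by
      refine hX _ (fun j hj => ?_) hc
      rw [Function.extend_apply' _ _ _ fun ⟨i, hi⟩ => hj (hi ▸ i.2), Pi.zero_apply]
    funext i
    simpa [Subtype.val_injective.extend_apply] using congrFun hz i
  simpa using LinearMap.finrank_le_finrank_of_injective hF

lemma RestrictedEigenvalue.card_le {s : Fin p → ℝ} {S : Finset (Fin p)}
    (hRE : RestrictedEigenvalue X (signCone s S) Δ) (hΔ : 0 < Δ) : S.card ≤ n := by
  refine card_le_of_mulVec_eq_zero (X := X) fun z hz hXz => ?_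
  rcases mem_signCone_or_neg_mem s hz with hmem | hmem
  · exact hRE.eq_zero_of_mulVec_eq_zero hΔ hmem hXz
  · exact neg_eq_zero.mp (hRE.eq_zero_of_mulVec_eq_zero hΔ hmem (by rw [mulVec_neg, hXz, neg_zero]))

lemma RestrictedEigenvalue.le_of_mem (hRE : RestrictedEigenvalue X K Δ) (hn : 0 < n) {c : ℝ}
    {v : Fin p → ℝ} (hv : v ∈ K) (hv0 : 0 < vnorm v) (hXv : vnorm (X *ᵥ v) ≤ c * √n * vnorm v) :
    Δ ≤ c := by
  have hsn : 0 < √(n : ℝ) := Real.sqrt_pos.mpr (Nat.cast_pos.mpr hn)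
  have h := hRE v hv
  rw [le_div_iff₀ hsn] at h
  refine le_of_mul_le_mul_right (a := vnorm v * √n) ?_ (mul_pos hv0 hsn)
  linarith

end RestrictedEigenvalue

lemma RestrictedEigenvalue.vnorm_mulVec_le {n p : ℕ} {X : Matrix (Fin n) (Fin p) ℝ}
    {s : Fin p → ℝ} {S : Finset (Fin p)} {Δ : ℝ} (hRE : RestrictedEigenvalue X (signCone s S) Δ)
    (hn : 0 < n) (hΔ : 0 < Δ) {lam E : ℝ} (hlam : 0 ≤ lam) (hE : 0 ≤ E) {h : Fin p → ℝ}
    (hbasic : vnorm (X *ᵥ h) ^ 2 ≤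
      E * vnorm (X *ᵥ h) + lam * √n * (-(s ⬝ᵥ h) - ∑ j ∈ Sᶜ, |h j|)) :
    vnorm (X *ᵥ h) ≤ E + lam * vnorm s / Δ := by
  set T := vnorm (X *ᵥ h)
  set D := -(s ⬝ᵥ h) - ∑ j ∈ Sᶜ, |h j|
  have hsn : 0 < √(n : ℝ) := Real.sqrt_pos.mpr (Nat.cast_pos.mpr hn)
  have hcoef : 0 ≤ lam * vnorm s / Δ := div_nonneg (mul_nonneg hlam (vnorm_nonneg s)) hΔ.le
  rcases le_or_gt T E with hTE | hTE
  · linarith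
  have hT : 0 < T := hE.trans_lt hTE
  have hD : 0 < D := pos_of_mul_pos_right (by nlinarith) (by positivity : 0 ≤ lam * √n)
  have hmem : h ∈ signCone s S := by
    rw [signCone, Set.mem_ofPred_eq]
    linarith
  have hRE_h : Δ * vnorm h * √n ≤ T := (le_div_iff₀ hsn).mp (hRE h hmem)
  have hD_le : D ≤ vnorm s * vnorm h := by
    have hCS := dotProduct_le_vnorm_mul_vnorm (-s) h
    rw [neg_dotProduct, vnorm_neg] at hCS
    linarith [sum_nonneg fun j (_ : j ∈ Sᶜ) => abs_nonneg (h j)]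
  have hpen : lam * √n * D ≤ lam * vnorm s / Δ * T :=
    calc lam * √n * D ≤ lam * √n * (vnorm s * vnorm h) :=
          mul_le_mul_of_nonneg_left hD_le (by positivity)
      _ = lam * vnorm s / Δ * (Δ * vnorm h * √n) := by field_simp
      _ ≤ lam * vnorm s / Δ * T := mul_le_mul_of_nonneg_left hRE_h hcoef
  exact le_of_mul_le_mul_right (a := T) (by nlinarith) hT

theorem stmt_6_general {n p : ℕ} (hn : 0 < n)
    (X : Matrix (Fin n) (Fin p) ℝ) (ε : Fin n → ℝ) (y : Fin n → ℝ)
    (lam Δ c₁ c₂ c₃ : ℝ) (hlam : 0 < lam) (hΔ : 0 < Δ)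
    (hc₃ : 0 < c₃)
    (s : Fin p → ℝ) (hs : ∀ j, s j = -1 ∨ s j = 0 ∨ s j = 1)
    (S : Finset (Fin p)) (hS : S = Finset.univ.filter (fun j => s j ≠ 0))
    (k : ℕ) (hk : k = S.card) (hk1 : 1 ≤ k)
    (K : Set (Fin p → ℝ))
    (hK : K = {h : Fin p → ℝ | ∑ j ∈ Sᶜ, |h j| ≤ -(s ⬝ᵥ h)})
    (hRE : ∀ v ∈ K, Δ * vnorm v ≤ vnorm (X.mulVec v) / Real.sqrt n)
    (hXs : vnorm (X.mulVec s) ≤ c₁ * Real.sqrt ((n : ℝ) * k))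
    (hnk : Real.sqrt n ≤ c₂ * Real.sqrt k)
    (hε : vnorm ε ≤ c₃ * Real.sqrt n)
    (bstar : Fin p → ℝ) (hsign : ∀ j, bstar j ≠ 0 → Real.sign (bstar j) = s j)
    (hy : y = X.mulVec bstar + ε)
    (bhat : Fin p → ℝ)
    (hbhat : ∀ b : Fin p → ℝ,
      (1/2) * (vnorm (X.mulVec bhat - y))^2 + lam * Real.sqrt n * vnorm1 bhat ≤
      (1/2) * (vnorm (X.mulVec b - y))^2 + lam * Real.sqrt n * vnorm1 b) :
    vnorm (X.mulVec (bhat - bstar)) / Real.sqrt n ≤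
      Δ⁻¹ * (lam * Real.sqrt ((k : ℝ) / n) + c₁ * c₂ * c₃) := by
  subst hK hy
  replace hRE : RestrictedEigenvalue X (signCone s S) Δ := hRE
  have hsn : 0 < √(n : ℝ) := Real.sqrt_pos.mpr (Nat.cast_pos.mpr hn)
  have hsk : 0 < √(k : ℝ) := Real.sqrt_pos.mpr (Nat.cast_pos.mpr hk1)
  have hs_norm : vnorm s = √k := hk ▸ vnorm_eq_sqrt_card hs hS
  have hΔc₁ : Δ ≤ c₁ := by
    refine hRE.le_of_mem hn (neg_mem_signCone fun j hj => ?_) (by rwa [vnorm_neg, hs_norm]) ?_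
    · simpa [hS] using hj
    · rwa [mulVec_neg, vnorm_neg, vnorm_neg, hs_norm, mul_assoc, ← Real.sqrt_mul n.cast_nonneg]
  have hc₂_one : 1 ≤ c₂ := by
    have hkn : √(k : ℝ) ≤ √n := Real.sqrt_le_sqrt (by exact_mod_cast hk ▸ hRE.card_le hΔ)
    exact le_of_mul_le_mul_right (by linarith) hsk
  have hpred := hRE.vnorm_mulVec_le hn hΔ hlam.le (vnorm_nonneg ε) (h := bhat - bstar) <|
    calc _ ≤ _ := lasso_basic_inequality X bstar bhat ε (by positivity) hbhat
      _ ≤ _ := add_le_add ((dotProduct_le_vnorm_mul_vnorm _ _).trans_eq (mul_comm _ _))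
          (mul_le_mul_of_nonneg_left (vnorm1_sub_vnorm1_le hs hS hsign bhat) (by positivity))
  have hc₃_le : c₃ ≤ Δ⁻¹ * (c₁ * c₂ * c₃) := by
    rw [le_inv_mul_iff₀ hΔ]
    linarith [mul_le_mul_of_nonneg_right hΔc₁ hc₃.le,
      mul_nonneg (mul_nonneg (sub_nonneg.mpr hc₂_one) (hΔ.le.trans hΔc₁)) hc₃.le]
  rw [div_le_iff₀ hsn, Real.sqrt_div' _ (Nat.cast_nonneg n)]
  calc _ ≤ vnorm ε + lam * √k / Δ := hs_norm ▸ hpred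
    _ ≤ c₃ * √n + lam * √k / Δ := by gcongr
    _ ≤ Δ⁻¹ * (c₁ * c₂ * c₃) * √n + lam * √k / Δ := by gcongr
    _ = _ := by field_simp; ring

/-- inequality (pre-risk) of Proposition 3.1: the restricted
eigenvalue condition on the cone `K` implies the prediction-error bound
`‖Xh‖/√n ≤ Δ*⁻¹(λ√(k/n) + c₁c₂c₃)`. -/
theorem stmt_6 {n p : ℕ} (hn : 0 < n)
    (X : Matrix (Fin n) (Fin p) ℝ) (ε : Fin n → ℝ) (y : Fin n → ℝ)
    (lam Δ c₁ c₂ c₃ : ℝ) (hlam : 0 < lam) (hΔ : 0 < Δ)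
    (hc₁ : 0 < c₁) (hc₂ : 0 < c₂) (hc₃ : 0 < c₃)
    (s : Fin p → ℝ) (hs : ∀ j, s j = -1 ∨ s j = 0 ∨ s j = 1)
    (S : Finset (Fin p)) (hS : S = Finset.univ.filter (fun j => s j ≠ 0))
    (k : ℕ) (hk : k = S.card) (hk1 : 1 ≤ k)
    (K : Set (Fin p → ℝ))
    (hK : K = {h : Fin p → ℝ | ∑ j ∈ Sᶜ, |h j| ≤ -(s ⬝ᵥ h)})
    (hRE : ∀ v ∈ K, Δ * vnorm v ≤ vnorm (X.mulVec v) / Real.sqrt n)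
    (hXs : vnorm (X.mulVec s) ≤ c₁ * Real.sqrt ((n : ℝ) * k))
    (hnk : Real.sqrt n ≤ c₂ * Real.sqrt k)
    (hε : vnorm ε ≤ c₃ * Real.sqrt n)
    (bstar : Fin p → ℝ) (hsign : ∀ j, bstar j ≠ 0 → Real.sign (bstar j) = s j)
    (hy : y = X.mulVec bstar + ε)
    (bhat : Fin p → ℝ)
    (hbhat : ∀ b : Fin p → ℝ,
      (1/2) * (vnorm (X.mulVec bhat - y))^2 + lam * Real.sqrt n * vnorm1 bhat ≤
      (1/2) * (vnorm (X.mulVec b - y))^2 + lam * Real.sqrt n * vnorm1 b) :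
    vnorm (X.mulVec (bhat - bstar)) / Real.sqrt n ≤
      Δ⁻¹ * (lam * Real.sqrt ((k : ℝ) / n) + c₁ * c₂ * c₃) :=
  stmt_6_general hn X ε y lam Δ c₁ c₂ c₃ hlam hΔ hc₃ s hs S hS k hk hk1 K hK hRE hXs hnk hε bstar
    hsign hy bhat hbhat
end

section
/- Suppose there exists h₀ in the interior of the cone K = {h ∈ ℝ^p : Σ_{j∈S^c}|h_j| < −sᵀh interpreted with strict inequality on the interior} with Xh₀ = 0 and h₀ ≠ 0, where b₀ has sign pattern s with support S. Then there exists t > 0 and b̃₀ = b₀ + t h₀ ≠ b₀ with Xb̃₀ = Xb₀ and ‖b̃₀‖₁ < ‖b₀‖₁. -/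
/-! For small `t > 0` no nonzero coordinate of `b₀ + t • h₀` changes sign, so the ℓ¹ norm is affine
in `t` with slope `s ⬝ᵥ h₀ + ∑ j ∈ Sᶜ, |h₀ j|`, which is negative on the interior of the cone;
`X *ᵥ h₀ = 0` keeps the moved point feasible. -/

open Matrix BigOperators

open Filter Topology Finset

theorem abs_add_mul_eq_of_mul_abs_le {b h t : ℝ} (ht : 0 ≤ t) (hsmall : t * |h| ≤ |b|) :
    |b + t * h| = |b| + t * (Real.sign b * h) := by
  have hlow : -(t * |h|) ≤ t * h := by
    rw [← mul_neg]; exact mul_le_mul_of_nonneg_left (neg_abs_le h) ht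
  have hup : t * h ≤ t * |h| := mul_le_mul_of_nonneg_left (le_abs_self h) ht
  rcases lt_trichotomy b 0 with hb | rfl | hb
  · rw [Real.sign_of_neg hb, abs_of_neg hb] at *
    rw [abs_of_nonpos (by linarith)]; ring
  · have : t * h = 0 := by simp only [abs_zero] at hsmall; linarith
    simp [this]
  · rw [Real.sign_of_pos hb, abs_of_pos hb] at *
    rw [abs_of_nonneg (by linarith)]; ring

theorem vnorm1_add_smul {m : ℕ} (b h : Fin m → ℝ) {t : ℝ} (ht : 0 ≤ t)
    (hsmall : ∀ j, b j ≠ 0 → t * |h j| ≤ |b j|) :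
    vnorm1 (b + t • h) =
      vnorm1 b + t * ((Real.sign ∘ b) ⬝ᵥ h + ∑ j with b j = 0, |h j|) := by
  have hcoord : ∀ j, |b j + t * h j| =
      |b j| + t * (Real.sign (b j) * h j) + if b j = 0 then t * |h j| else 0 := by
    intro j
    by_cases hb : b j = 0
    · simp [hb, abs_mul, abs_of_nonneg ht]
    · simp [hb, abs_add_mul_eq_of_mul_abs_le ht (hsmall j hb)]
  simp only [vnorm1, Pi.add_apply, Pi.smul_apply, smul_eq_mul, hcoord, sum_add_distrib,
    ← sum_filter, dotProduct, Function.comp_apply, mul_add, mul_sum, add_assoc]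

theorem exists_pos_forall_mul_abs_le {ι : Type*} [Finite ι] (b h : ι → ℝ) :
    ∃ t > 0, ∀ j, b j ≠ 0 → t * |h j| ≤ |b j| := by
  have hnear : ∀ j, b j ≠ 0 → ∀ᶠ t in 𝓝[>] (0 : ℝ), t * |h j| ≤ |b j| := by
    intro j hb
    have hlim : Tendsto (fun t : ℝ => t * |h j|) (𝓝[>] 0) (𝓝 0) := by
      simpa using ((continuous_mul_const |h j|).tendsto 0).mono_left nhdsWithin_le_nhds
    exact hlim.eventually (ge_mem_nhds (abs_pos.mpr hb))
  have hall := (eventually_all.mpr fun j => eventually_imp_distrib_left.mpr (hnear j))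
  exact (hall.and self_mem_nhdsWithin).exists.imp fun t ⟨hsmall, hpos⟩ => ⟨hpos, hsmall⟩

theorem stmt_10_general {n p : ℕ} (X : Matrix (Fin n) (Fin p) ℝ)
    (s : Fin p → ℝ)
    (S : Finset (Fin p)) (hS : S = Finset.univ.filter (fun j => s j ≠ 0))
    (b₀ : Fin p → ℝ)
    (hsign : ∀ j ∈ S, Real.sign (b₀ j) = s j ∧ b₀ j ≠ 0)
    (hzero : ∀ j, j ∉ S → b₀ j = 0)
    (h₀ : Fin p → ℝ) (hker : X.mulVec h₀ = 0)
    (hint : ∑ j ∈ Sᶜ, |h₀ j| < -(s ⬝ᵥ h₀)) :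
    ∃ t : ℝ, 0 < t ∧
      X.mulVec (b₀ + t • h₀) = X.mulVec b₀ ∧
      b₀ + t • h₀ ≠ b₀ ∧
      vnorm1 (b₀ + t • h₀) < vnorm1 b₀ := by
  obtain ⟨t, ht, hsmall⟩ := exists_pos_forall_mul_abs_le b₀ h₀
  have hsign_comp : Real.sign ∘ b₀ = s := by
    funext j
    by_cases hj : j ∈ S
    · exact (hsign j hj).1
    · have hsj : s j = 0 := by simpa [hS] using hj
      rw [Function.comp_apply, hzero j hj, Real.sign_zero, hsj]
  have hzero_set : ({j | b₀ j = 0} : Finset (Fin p)) = Sᶜ := by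
    ext j
    simp only [mem_filter, mem_univ, true_and, mem_compl]
    exact ⟨fun hb hj => (hsign j hj).2 hb, hzero j⟩
  have hlt : vnorm1 (b₀ + t • h₀) < vnorm1 b₀ := by
    rw [vnorm1_add_smul b₀ h₀ ht.le hsmall, hsign_comp, hzero_set]
    have hslope : s ⬝ᵥ h₀ + ∑ j ∈ Sᶜ, |h₀ j| < 0 := by linarith
    linarith [mul_neg_of_pos_of_neg ht hslope]
  exact ⟨t, ht, by simp [mulVec_add, mulVec_smul, hker], fun h => hlt.ne (by rw [h]), hlt⟩

/-- a nonzero kernel vector in the interior of the cone `K`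
yields a feasible point of Basis Pursuit with strictly smaller L1 norm. -/
theorem stmt_10 {n p : ℕ} (X : Matrix (Fin n) (Fin p) ℝ)
    (s : Fin p → ℝ) (hs : ∀ j, s j = -1 ∨ s j = 0 ∨ s j = 1)
    (S : Finset (Fin p)) (hS : S = Finset.univ.filter (fun j => s j ≠ 0))
    (b₀ : Fin p → ℝ)
    (hsign : ∀ j ∈ S, Real.sign (b₀ j) = s j ∧ b₀ j ≠ 0)
    (hzero : ∀ j, j ∉ S → b₀ j = 0)
    (h₀ : Fin p → ℝ) (hker : X.mulVec h₀ = 0) (hne : h₀ ≠ 0)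
    (hint : ∑ j ∈ Sᶜ, |h₀ j| < -(s ⬝ᵥ h₀)) :
    ∃ t : ℝ, 0 < t ∧
      X.mulVec (b₀ + t • h₀) = X.mulVec b₀ ∧
      b₀ + t • h₀ ≠ b₀ ∧
      vnorm1 (b₀ + t • h₀) < vnorm1 b₀ :=
  stmt_10_general X s S hS b₀ hsign hzero h₀ hker hint
end
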